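/- Let m₁, m₂, α_u, β_u be reals with α_u² + β_u² = 1 and set c = α_u⁴m₁ + β_u⁴m₂ + 6α_u²β_u², with c ≠ 3. Define w₁ = (m₁−3)/(c−3) and w₂ = (m₂−3)/(c−3). Then w₁ + w₂ − w₁·w₂ ≥ 0, and in particular max{w₁, w₂} > 0. -/

import Mathlib

theorem stmt_12 (m₁ m₂ αu βu c w₁ w₂ : ℝ)
    (hunit : αu ^ 2 + βu ^ 2 = 1)
    (hc : c = αu ^ 4 * m₁ + βu ^ 4 * m₂ + 6 * αu ^ 2 * βu ^ 2)
    (hc3 : c ≠ 3)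
    (hw₁ : w₁ = (m₁ - 3) / (c - 3)) (hw₂ : w₂ = (m₂ - 3) / (c - 3)) :
    0 ≤ w₁ + w₂ - w₁ * w₂ ∧ 0 < max w₁ w₂ := by
  have hd : c - 3 ≠ 0 := sub_ne_zero.mpr hc3
  have key : c - 3 = αu ^ 4 * (m₁ - 3) + βu ^ 4 * (m₂ - 3) := by
    linear_combination hc + 3 * (αu ^ 2 + βu ^ 2 + 1) * hunit
  have hnum : ((m₁ - 3) + (m₂ - 3)) * (c - 3) - (m₁ - 3) * (m₂ - 3) =
      (αu ^ 2 * (m₁ - 3) - βu ^ 2 * (m₂ - 3)) ^ 2 := by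
    linear_combination ((m₁ - 3) + (m₂ - 3)) * key +
      (αu ^ 2 + βu ^ 2 + 1) * (m₁ - 3) * (m₂ - 3) * hunit
  have heq : w₁ + w₂ - w₁ * w₂ =
      (((m₁ - 3) + (m₂ - 3)) * (c - 3) - (m₁ - 3) * (m₂ - 3)) / (c - 3) ^ 2 := by
    rw [hw₁, hw₂]; field_simp
  have h1 : αu ^ 4 * w₁ + βu ^ 4 * w₂ = 1 := by
    rw [hw₁, hw₂]
    rw [show αu ^ 4 * ((m₁ - 3) / (c - 3)) + βu ^ 4 * ((m₂ - 3) / (c - 3)) =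
      (αu ^ 4 * (m₁ - 3) + βu ^ 4 * (m₂ - 3)) / (c - 3) by ring, ← key, div_self hd]
  constructor
  · rw [heq, hnum]; positivity
  · by_contra h
    push_neg at h
    have h1' : w₁ ≤ 0 := le_trans (le_max_left _ _) h
    have h2' : w₂ ≤ 0 := le_trans (le_max_right _ _) h
    nlinarith [sq_nonneg (αu ^ 2), sq_nonneg (βu ^ 2), h1, h1', h2']
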